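/- Let A be an N×N strongly regular complex matrix with A(i,j) = 0 whenever |i−j| > r. Suppose A = L·R where R is an invertible upper triangular matrix with R(i,j) = 0 for j − i > r, and L is a unit lower triangular matrix whose inverse factors as L⁻¹ = L̃_{N−r+1}·L̃_{N−r}⋯L̃_1 (product in decreasing order of indices) with lower triangular factors L_k ∈ ℂ^{(r+1)×(r+1)} (k = 1,…,N−r) and lower triangular L_{N−r+1} ∈ ℂ^{r×r}. Partition L_k = [[p_L(k), d_L(k)],[a_L(k), q_L(k)]] (blocks of sizes 1×r, 1×1, r×r, r×1). Set x_k = R(k,k) and X_k = R(k, k+1:k+r) for k = 1,…,N−r, and S_{N−r+1} = R(N−r+1:N, N−r+1:N). Define q(k) = q_L(k) and a(k) = a_L(k) for k = 1,…,N−r; set p(N−r+1) = S_{N−r+1}⁻¹·L_{N−r+1} and t_{N−r+1} = p(N−r+1); and for k = N−r,…,1 set p(k) = (1/x_k)·(p_L(k) − X_k·t_{k+1}·a(k)) and t_k = (p(k); t_{k+1}(1:r−1, :)·a(k)) (the row p(k) stacked above the (r−1)×r matrix t_{k+1}(1:r−1,:)·a(k)). Then p(i), q(i), a(i) (i = 1,…,N−r),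 p(N−r+1) are lower Green generators of A⁻¹. -/

import Mathlib

open Matrix

noncomputable section

/-- `A(i,j) = 0` whenever `i - j > r` (1-based; identical in 0-based `Fin` indexing). -/
def IsLowerBand (N r : ℕ) (A : Matrix (Fin N) (Fin N) ℂ) : Prop :=
  ∀ i j : Fin N, (j : ℕ) + r < (i : ℕ) → A i j = 0

/-- `A(i,j) = 0` whenever `j - i > r`. -/
def IsUpperBand (N r : ℕ) (A : Matrix (Fin N) (Fin N) ℂ) : Prop :=
  ∀ i j : Fin N, (i : ℕ) + r < (j : ℕ) → A i j = 0

/-- `rank B(k:N, 1:k+r-1) ≤ r` for every `k = 1, …, N-r` (1-based). -/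
def IsLowerGreen (N r : ℕ) (B : Matrix (Fin N) (Fin N) ℂ) : Prop :=
  ∀ (k : ℕ) (hk1 : 1 ≤ k) (hk2 : k ≤ N - r),
    (B.submatrix
      (fun i : Fin (N - k + 1) => (⟨k - 1 + (i : ℕ), by have := i.isLt; omega⟩ : Fin N))
      (fun j : Fin (k + r - 1) => (⟨(j : ℕ), by have := j.isLt; omega⟩ : Fin N))).rank ≤ r

/-- `rank B(1:k+r-1, k:N) ≤ r` for every `k = 1, …, N-r` (1-based). -/
def IsUpperGreen (N r : ℕ) (B : Matrix (Fin N) (Fin N) ℂ) : Prop :=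
  ∀ (k : ℕ) (hk1 : 1 ≤ k) (hk2 : k ≤ N - r),
    (B.submatrix
      (fun i : Fin (k + r - 1) => (⟨(i : ℕ), by have := i.isLt; omega⟩ : Fin N))
      (fun j : Fin (N - k + 1) => (⟨k - 1 + (j : ℕ), by have := j.isLt; omega⟩ : Fin N))).rank ≤ r

/-- `a^>_{i,s} = a(i-1) a(i-2) ⋯ a(s+1)`, equal to `I_r` when `s ≥ i - 1`. -/
def aGT (r : ℕ) (a : ℕ → Matrix (Fin r) (Fin r) ℂ) (i s : ℕ) :
    Matrix (Fin r) (Fin r) ℂ :=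
  (((List.range' (s + 1) (i - 1 - s)).reverse).map a).prod

/-- `p(i) ∈ ℂ^{1×r}` (i = 1,…,N−r), `pLast = p(N−r+1) ∈ ℂ^{r×r}`, `q(j) ∈ ℂ^{r×1}`,
`a(k) ∈ ℂ^{r×r}` are lower Green generators of the `N×N` matrix `B`:
`B(i,1:r) = p(i)·a^>_{i,0}`, `B(i,r+s-1) = p(i)·a^>_{i,s-1}·q(s-1)` for `2 ≤ s ≤ i ≤ N-r`,
and the analogous identities for the last `r` rows `B(N-r+1:N, ·)` with `pLast`. -/
def IsLowerGreenGenerators (N r : ℕ) (hNr : r < N)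
    (p : ℕ → Matrix (Fin 1) (Fin r) ℂ) (q : ℕ → Matrix (Fin r) (Fin 1) ℂ)
    (a : ℕ → Matrix (Fin r) (Fin r) ℂ) (pLast : Matrix (Fin r) (Fin r) ℂ)
    (B : Matrix (Fin N) (Fin N) ℂ) : Prop :=
  (∀ (i : ℕ) (hi1 : 1 ≤ i) (hi2 : i ≤ N - r) (j : Fin r),
      B ⟨i - 1, by omega⟩ ⟨(j : ℕ), by have := j.isLt; omega⟩ = (p i * aGT r a i 0) 0 j)
  ∧ (∀ (i : ℕ) (hi1 : 1 ≤ i) (hi2 : i ≤ N - r) (s : ℕ) (hs1 : 2 ≤ s) (hs2 : s ≤ i),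
      B ⟨i - 1, by omega⟩ ⟨r + s - 2, by omega⟩
        = (p i * aGT r a i (s - 1) * q (s - 1)) 0 0)
  ∧ (∀ (t : Fin r) (j : Fin r),
      B ⟨N - r + (t : ℕ), by have := t.isLt; omega⟩ ⟨(j : ℕ), by have := j.isLt; omega⟩
        = (pLast * aGT r a (N - r + 1) 0) t j)
  ∧ (∀ (t : Fin r) (s : ℕ) (hs1 : 2 ≤ s) (hs2 : s ≤ N - r + 1),
      B ⟨N - r + (t : ℕ), by have := t.isLt; omega⟩ ⟨r + s - 2, by omega⟩
        = (pLast * aGT r a (N - r + 1) (s - 1) * q (s - 1)) t 0)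

/-- The embedded factor `I_{k-1} ⊕ M ⊕ I_{N-k-r}` (1-based block position `k`),
i.e. `M` occupies (1-based) rows and columns `k, …, k+r` of an `N×N` identity. -/
def embed (N r k : ℕ) (M : Matrix (Fin (r + 1)) (Fin (r + 1)) ℂ) :
    Matrix (Fin N) (Fin N) ℂ :=
  Matrix.of fun i j =>
    if h : k - 1 ≤ (i : ℕ) ∧ (i : ℕ) < k + r ∧ k - 1 ≤ (j : ℕ) ∧ (j : ℕ) < k + r then
      M ⟨(i : ℕ) - (k - 1), by omega⟩ ⟨(j : ℕ) - (k - 1), by omega⟩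
    else if (i : ℕ) = (j : ℕ) then 1 else 0

/-- The embedded last factor `I_{N-r} ⊕ M`. -/
def embedLast (N r : ℕ) (M : Matrix (Fin r) (Fin r) ℂ) : Matrix (Fin N) (Fin N) ℂ :=
  Matrix.of fun i j =>
    if h : N - r ≤ (i : ℕ) ∧ N - r ≤ (j : ℕ) then
      M ⟨(i : ℕ) - (N - r), by have := i.isLt; omega⟩
        ⟨(j : ℕ) - (N - r), by have := j.isLt; omega⟩
    else if (i : ℕ) = (j : ℕ) then 1 else 0

/-- `G̃_1 · G̃_2 ⋯ G̃_{N-r}` (increasing order of indices). -/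
def prodAsc (N r : ℕ) (G : ℕ → Matrix (Fin (r + 1)) (Fin (r + 1)) ℂ) :
    Matrix (Fin N) (Fin N) ℂ :=
  ((List.range' 1 (N - r)).map (fun k => embed N r k (G k))).prod

/-- `G̃_{N-r} · G̃_{N-r-1} ⋯ G̃_1` (decreasing order of indices). -/
def prodDesc (N r : ℕ) (G : ℕ → Matrix (Fin (r + 1)) (Fin (r + 1)) ℂ) :
    Matrix (Fin N) (Fin N) ℂ :=
  (((List.range' 1 (N - r)).reverse).map (fun k => embed N r k (G k))).prod

/-- The `1×r` block `p` of the partition `M = [[p, d], [a, q]]`. -/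
def blkP (r : ℕ) (M : Matrix (Fin (r + 1)) (Fin (r + 1)) ℂ) : Matrix (Fin 1) (Fin r) ℂ :=
  Matrix.of fun _ j => M 0 j.castSucc

/-- The `1×1` block `d` of the partition `M = [[p, d], [a, q]]`. -/
def blkD (r : ℕ) (M : Matrix (Fin (r + 1)) (Fin (r + 1)) ℂ) : ℂ := M 0 (Fin.last r)

/-- The `r×r` block `a` of the partition `M = [[p, d], [a, q]]`. -/
def blkA (r : ℕ) (M : Matrix (Fin (r + 1)) (Fin (r + 1)) ℂ) : Matrix (Fin r) (Fin r) ℂ :=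
  Matrix.of fun i j => M i.succ j.castSucc

/-- The `r×1` block `q` of the partition `M = [[p, d], [a, q]]`. -/
def blkQ (r : ℕ) (M : Matrix (Fin (r + 1)) (Fin (r + 1)) ℂ) : Matrix (Fin r) (Fin 1) ℂ :=
  Matrix.of fun i _ => M i.succ (Fin.last r)

/-- Assemble the `(r+1)×(r+1)` matrix `[[p, d], [a, q]]` from its blocks. -/
def mkBlk (r : ℕ) (p : Matrix (Fin 1) (Fin r) ℂ) (d : ℂ)
    (a : Matrix (Fin r) (Fin r) ℂ) (q : Matrix (Fin r) (Fin 1) ℂ) :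
    Matrix (Fin (r + 1)) (Fin (r + 1)) ℂ :=
  Matrix.of fun i j =>
    if hi : (i : ℕ) = 0 then
      if hj : (j : ℕ) < r then p 0 ⟨(j : ℕ), hj⟩ else d
    else
      if hj : (j : ℕ) < r then a ⟨(i : ℕ) - 1, by have := i.isLt; omega⟩ ⟨(j : ℕ), hj⟩
      else q ⟨(i : ℕ) - 1, by have := i.isLt; omega⟩ 0

/-- The elementary Gauss factor `[[1, 0_{1×r}], [-f, I_r]]`. -/
def elemL (r : ℕ) (f : Matrix (Fin r) (Fin 1) ℂ) :
    Matrix (Fin (r + 1)) (Fin (r + 1)) ℂ :=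
  Matrix.of fun i j =>
    if hi : (i : ℕ) = 0 then (if (j : ℕ) = 0 then 1 else 0)
    else if hj : (j : ℕ) = 0 then -f ⟨(i : ℕ) - 1, by have := i.isLt; omega⟩ 0
    else if (i : ℕ) = (j : ℕ) then 1 else 0

/-- The elementary factor `[[I_r, 0_{r×1}], [-g, 1]]`. -/
def elemLrow (r : ℕ) (g : Matrix (Fin 1) (Fin r) ℂ) :
    Matrix (Fin (r + 1)) (Fin (r + 1)) ℂ :=
  Matrix.of fun i j =>
    if hi : (i : ℕ) < r then
      (if hj : (j : ℕ) < r then (if (i : ℕ) = (j : ℕ) then 1 else 0) else 0)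
    else if hj : (j : ℕ) < r then -g 0 ⟨(j : ℕ), hj⟩ else 1

/-- All leading principal minors are nonzero. -/
def StronglyRegular (N : ℕ) (A : Matrix (Fin N) (Fin N) ℂ) : Prop :=
  ∀ (k : ℕ) (hk : k ≤ N), 1 ≤ k →
    (A.submatrix (Fin.castLE hk) (Fin.castLE hk)).det ≠ 0

/-!
Write `B_k := R⁻¹ L̃_{N-r+1} L̃_{N-r} ⋯ L̃_k`, so that `B_1 = A⁻¹` and `B_k = B_{k+1} L̃_k`.
Right multiplication by `L̃_k` only recombines the columns `k, …, k+r` (1-based). Column `k`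
of `B_{k+1}` is still a column of the upper triangular `R⁻¹`, so on every row below `k` the
columns `k, …, k+r-1` of `B_k` are the columns `k+1, …, k+r` of `B_{k+1}` times `a(k)`, and
column `k+r` of `B_k` is the same row segment times `q(k)`. Descending from `B_i` (or from
`B_{N-r+1}`) to `B_1` produces the products `a^>_{i,s}`, with the row of the diagonal
`r × r` block of `B_i` starting at `(i, i)` in place of `p(i)`.

It remains to see, by downward induction, that this diagonal block of `B_k` is `t_k`. For
`k = N-r+1` it is the trailing block of `R⁻¹ L̃_{N-r+1}`, i.e. `S_{N-r+1}⁻¹ L_{N-r+1}` since `R`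
is upper triangular. Its lower rows are those of the block of `B_{k+1}` times `a(k)`, and its
first row is read off row `k` of `R B_k = L̃_{N-r+1} ⋯ L̃_k`: on the window this row is the
first row of `L_k`, while row `k` of `R` is `x_k` followed by `X_k`, giving
`x_k p(k) + X_k t_{k+1} a(k) = p_L(k)`.

Block indices `k` are 1-based as above, matrix indices are 0-based: row `k` is `⟨k - 1, _⟩`.
-/

theorem Fin.sum_univ_eq_sum_window {M : Type*} [AddCommMonoid M] {N : ℕ} (f : Fin N → M)
    (o w : ℕ) (h : o + w ≤ N)
    (hf : ∀ l : Fin N, (l : ℕ) < o ∨ o + w ≤ (l : ℕ) → f l = 0) :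
    ∑ l, f l = ∑ m : Fin w, f ⟨o + m, by omega⟩ := by
  refine (Fintype.sum_of_injective (fun m : Fin w => (⟨o + m, by omega⟩ : Fin N))
    (fun m m' hm => Fin.ext (by simpa using hm)) _ f (fun l hl => hf l ?_) fun _ => rfl).symm
  by_contra! hlw
  exact hl ⟨⟨l - o, by omega⟩, Fin.ext (by simp only; omega)⟩

namespace Matrix

variable {α n : Type*} [Fintype n] [DecidableEq n]

section IdentityOn

variable [NonAssocSemiring α] {E : Matrix n n α}

theorem mul_apply_of_col_eq_one (M : Matrix n n α) (i : n) {j : n}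
    (hE : ∀ l, E l j = (1 : Matrix n n α) l j) : (M * E) i j = M i j := by
  calc (M * E) i j = (M * (1 : Matrix n n α)) i j := by simp only [mul_apply, hE]
    _ = M i j := by rw [Matrix.mul_one]

theorem mul_apply_of_row_eq_one (M : Matrix n n α) {i : n} (j : n)
    (hE : ∀ l, E i l = (1 : Matrix n n α) i l) : (E * M) i j = M i j := by
  calc (E * M) i j = ((1 : Matrix n n α) * M) i j := by simp only [mul_apply, hE]
    _ = M i j := by rw [Matrix.one_mul]

def identityOn (α : Type*) [NonAssocSemiring α] (S : Set n) : Submonoid (Matrix n n α) where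
  carrier := {M | ∀ i j, i ∈ S ∨ j ∈ S → M i j = (1 : Matrix n n α) i j}
  one_mem' _ _ _ := rfl
  mul_mem' {M E} hM hE i j hij := by
    rcases hij with hi | hj
    · rw [mul_apply_of_row_eq_one E j fun l => hM i l (Or.inl hi), hE i j (Or.inl hi)]
    · rw [mul_apply_of_col_eq_one M i fun l => hE l j (Or.inr hj), hM i j (Or.inr hj)]

variable {S T : Set n}

theorem identityOn_anti (h : S ⊆ T) : identityOn α T ≤ identityOn α S :=
  fun _ hE i j hij => hE i j (hij.imp (@h i) (@h j))

theorem mul_apply_of_mem_identityOn_right (hE : E ∈ identityOn α S) (M : Matrix n n α) (i : n)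
    {j : n} (hj : j ∈ S) : (M * E) i j = M i j :=
  mul_apply_of_col_eq_one M i fun l => hE l j (Or.inr hj)

theorem mul_apply_of_mem_identityOn_left (hE : E ∈ identityOn α S) (M : Matrix n n α) {i : n}
    (hi : i ∈ S) (j : n) : (E * M) i j = M i j :=
  mul_apply_of_row_eq_one M j fun l => hE i l (Or.inl hi)

end IdentityOn

theorem inv_submatrix_eq_submatrix_inv {m : Type*} [Fintype m] [DecidableEq m]
    [CommRing α] (M : Matrix n n α) (hM : IsUnit M.det) (e : m → n) (he : Function.Injective e)
    (hsupp : ∀ i l, l ∉ Set.range e → M (e i) l = 0) :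
    (M.submatrix e e)⁻¹ = M⁻¹.submatrix e e := by
  refine inv_eq_right_inv ?_
  ext u v
  calc (M.submatrix e e * M⁻¹.submatrix e e) u v = (M * M⁻¹) (e u) (e v) :=
        Fintype.sum_of_injective e he _ _ (fun l hl => mul_eq_zero_of_left (hsupp u l hl) _)
          fun _ => rfl
    _ = (1 : Matrix m m α) u v := by rw [mul_nonsing_inv M hM, ← submatrix_one e he]; rfl

theorem IsUpperTriangular.inv [CommRing α] [LinearOrder n] {M : Matrix n n α}
    (hM : M.IsUpperTriangular) : M⁻¹.IsUpperTriangular := by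
  by_cases h : IsUnit M.det
  · have := M.invertibleOfIsUnitDet h
    exact blockTriangular_inv_of_blockTriangular hM
  · rw [nonsing_inv_apply_not_isUnit M h]
    exact fun _ _ _ => rfl

theorem IsUpperTriangular.isUnit_apply_self [CommRing α] [LinearOrder n] {M : Matrix n n α}
    (hM : M.IsUpperTriangular) (h : IsUnit M) (i : n) : IsUnit (M i i) :=
  IsUnit.prod_univ_iff.mp (det_of_isUpperTriangular hM ▸ (isUnit_iff_isUnit_det M).mp h :) i

end Matrix


section EmbeddedFactors

variable {N r : ℕ}

theorem embed_mem_identityOn (k : ℕ) (G : Matrix (Fin (r + 1)) (Fin (r + 1)) ℂ) :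
    embed N r k G ∈ identityOn ℂ {i : Fin N | (i : ℕ) + 1 < k ∨ k + r ≤ (i : ℕ)} := by
  intro i j hij
  simp only [Set.mem_ofPred_eq] at hij
  simp only [embed, of_apply, one_apply, Fin.ext_iff]
  rw [dif_neg (by omega)]

theorem embedLast_mem_identityOn (G : Matrix (Fin r) (Fin r) ℂ) :
    embedLast N r G ∈ identityOn ℂ {i : Fin N | (i : ℕ) < N - r} := by
  intro i j hij
  simp only [Set.mem_ofPred_eq] at hij
  simp only [embedLast, of_apply, one_apply, Fin.ext_iff]
  rw [dif_neg (by omega)]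

theorem embed_apply_window {k : ℕ} (hk : 1 ≤ k) (G : Matrix (Fin (r + 1)) (Fin (r + 1)) ℂ)
    {a b : Fin N} {i j : Fin (r + 1)} (ha : (a : ℕ) = k - 1 + i) (hb : (b : ℕ) = k - 1 + j) :
    embed N r k G a b = G i j := by
  simp only [embed, of_apply]
  rw [dif_pos (by omega)]
  congr <;> omega

theorem embedLast_apply_window (G : Matrix (Fin r) (Fin r) ℂ) {a b : Fin N} {i j : Fin r}
    (ha : (a : ℕ) = N - r + i) (hb : (b : ℕ) = N - r + j) :
    embedLast N r G a b = G i j := by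
  simp only [embedLast, of_apply]
  rw [dif_pos (by omega)]
  congr <;> omega

theorem mul_embed_apply_window {k : ℕ} (hk : 1 ≤ k) (hkN : k + r ≤ N)
    (M : Matrix (Fin N) (Fin N) ℂ) (G : Matrix (Fin (r + 1)) (Fin (r + 1)) ℂ) (i : Fin N)
    (j : Fin (r + 1)) :
    (M * embed N r k G) i ⟨k - 1 + j, by omega⟩
      = ∑ m : Fin (r + 1), M i ⟨k - 1 + m, by omega⟩ * G m j := by
  rw [mul_apply, Fin.sum_univ_eq_sum_window _ (k - 1) (r + 1) (by omega)]
  · exact Finset.sum_congr rfl fun m _ => by rw [embed_apply_window hk G rfl rfl]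
  · intro l hl
    rw [embed_mem_identityOn k G l _ (Or.inl (by simp only [Set.mem_ofPred_eq]; omega)),
      one_apply_ne (fun h => by rw [Fin.ext_iff] at h; simp only at h; omega), mul_zero]

theorem mul_embedLast_apply_window (hrN : r ≤ N) (M : Matrix (Fin N) (Fin N) ℂ)
    (G : Matrix (Fin r) (Fin r) ℂ) (i : Fin N) (j : Fin r) :
    (M * embedLast N r G) i ⟨N - r + j, by omega⟩
      = ∑ m : Fin r, M i ⟨N - r + m, by omega⟩ * G m j := by
  rw [mul_apply, Fin.sum_univ_eq_sum_window _ (N - r) r (by omega)]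
  · exact Finset.sum_congr rfl fun m _ => by rw [embedLast_apply_window G rfl rfl]
  · intro l hl
    have hl : (l : ℕ) < N - r := by omega
    rw [embedLast_mem_identityOn G l _ (Or.inl hl),
      one_apply_ne (fun h => by rw [Fin.ext_iff] at h; simp only at h; omega), mul_zero]

end EmbeddedFactors

theorem aGT_of_le {r : ℕ} (a : ℕ → Matrix (Fin r) (Fin r) ℂ) {i s : ℕ} (h : i - 1 ≤ s) :
    aGT r a i s = 1 := by
  simp [aGT, show i - 1 - s = 0 by omega]

theorem aGT_succ_left {r : ℕ} (a : ℕ → Matrix (Fin r) (Fin r) ℂ) {m s : ℕ} (h : s < m) :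
    aGT r a (m + 1) s = a m * aGT r a m s := by
  rw [aGT, aGT, show m + 1 - 1 - s = (m - 1 - s) + 1 by omega, List.range'_concat]
  simp only [List.reverse_append, List.map_append, List.prod_append]
  simp [show s + 1 + (m - 1 - s) = m by omega]

/-- Columns `o, …, o + w - 1` of `M` (0-based), padded with zeros past the last column. -/
def colBlock {α : Type*} [Zero α] {N : ℕ} (M : Matrix (Fin N) (Fin N) α) (o w : ℕ) :
    Matrix (Fin N) (Fin w) α :=
  of fun i j => if h : o + (j : ℕ) < N then M i ⟨o + j, h⟩ else 0

theorem colBlock_apply {α : Type*} [Zero α] {N : ℕ} (M : Matrix (Fin N) (Fin N) α) (o w : ℕ)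
    (i : Fin N) {j : Fin w} {c : Fin N} (hc : (c : ℕ) = o + j) :
    colBlock M o w i j = M i c := by
  rw [colBlock, of_apply, dif_pos (hc ▸ c.isLt)]
  congr 1
  exact Fin.ext hc.symm

theorem mul_apply_of_upperBand {α : Type*} [NonUnitalNonAssocSemiring α] {N r : ℕ}
    {R : Matrix (Fin N) (Fin N) α} (hRtri : R.IsUpperTriangular)
    (hRband : ∀ i j : Fin N, (i : ℕ) + r < (j : ℕ) → R i j = 0) (M : Matrix (Fin N) (Fin N) α)
    {k : ℕ} (hk1 : 1 ≤ k) (hkN : k + r ≤ N) {d : Fin N} (hd : (d : ℕ) = k - 1)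
    (c : Fin N) :
    (R * M) d c
      = R d d * M d c + ∑ τ : Fin r, colBlock R k r d τ * M ⟨k + τ, by omega⟩ c := by
  rw [mul_apply, Fin.sum_univ_eq_sum_window _ (k - 1) (r + 1) (by omega), Fin.sum_univ_succ]
  · congr 1
    · rw [show (⟨k - 1 + ((0 : Fin (r + 1)) : ℕ), _⟩ : Fin N) = d from Fin.ext (by simp [hd])]
    refine Finset.sum_congr rfl fun τ _ => ?_
    rw [colBlock_apply _ _ _ _ (c := ⟨k + τ, by omega⟩) rfl]
    congr 3 <;> simp only [Fin.val_succ] <;> omega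
  · intro l hl
    rcases hl with hl | hl
    · rw [hRtri (show l < d by rw [Fin.lt_def, hd]; exact hl), zero_mul]
    · rw [hRband _ l (by omega), zero_mul]

section PartialProducts

variable {N r : ℕ} (Lk : ℕ → Matrix (Fin (r + 1)) (Fin (r + 1)) ℂ)
  (Llast : Matrix (Fin r) (Fin r) ℂ)

/-- `L̃_{N-r+1} · L̃_{N-r} ⋯ L̃_k`. -/
def prodDescFrom (N : ℕ) (k : ℕ) : Matrix (Fin N) (Fin N) ℂ :=
  embedLast N r Llast *
    (((List.range' k (N - r + 1 - k)).reverse.map fun m => embed N r m (Lk m))).prod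

theorem prodDescFrom_one :
    prodDescFrom Lk Llast N 1 = embedLast N r Llast * prodDesc N r Lk := by
  simp [prodDescFrom, prodDesc]

theorem prodDescFrom_top : prodDescFrom Lk Llast N (N - r + 1) = embedLast N r Llast := by
  simp [prodDescFrom]

theorem prodDescFrom_succ {k : ℕ} (hk : k ≤ N - r) :
    prodDescFrom Lk Llast N k = prodDescFrom Lk Llast N (k + 1) * embed N r k (Lk k) := by
  rw [prodDescFrom, prodDescFrom, show N - r + 1 - k = N - r + 1 - (k + 1) + 1 by omega,
    List.range'_succ, List.reverse_cons, List.map_append, List.prod_append, mul_assoc]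
  simp

theorem prodDescFrom_mem_identityOn {k : ℕ} (hk : k ≤ N - r + 1) :
    prodDescFrom Lk Llast N k ∈ identityOn ℂ {i : Fin N | (i : ℕ) + 1 < k} := by
  refine Submonoid.mul_mem _ (identityOn_anti (fun i hi => ?_) (embedLast_mem_identityOn Llast))
    (Submonoid.list_prod_mem _ fun E hE => ?_)
  · simp only [Set.mem_ofPred_eq] at hi ⊢
    omega
  · obtain ⟨m, hm, rfl⟩ := List.mem_map.mp hE
    rw [List.mem_reverse, List.mem_range'_1] at hm
    refine identityOn_anti (fun i hi => ?_) (embed_mem_identityOn m (Lk m))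
    simp only [Set.mem_ofPred_eq] at hi ⊢
    omega

variable (R : Matrix (Fin N) (Fin N) ℂ)

/-- `B_k := R⁻¹ · L̃_{N-r+1} · L̃_{N-r} ⋯ L̃_k`, so that `B_1 = A⁻¹`. -/
def partialInverse (k : ℕ) : Matrix (Fin N) (Fin N) ℂ := R⁻¹ * prodDescFrom Lk Llast N k

variable {Lk Llast R}

theorem mul_partialInverse (hR : IsUnit R) (k : ℕ) :
    R * partialInverse Lk Llast R k = prodDescFrom Lk Llast N k := by
  rw [partialInverse, ← Matrix.mul_assoc, mul_nonsing_inv R ((isUnit_iff_isUnit_det R).mp hR),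
    Matrix.one_mul]

theorem partialInverse_succ {k : ℕ} (hk : k ≤ N - r) :
    partialInverse Lk Llast R k = partialInverse Lk Llast R (k + 1) * embed N r k (Lk k) := by
  rw [partialInverse, partialInverse, prodDescFrom_succ Lk Llast hk, Matrix.mul_assoc]

theorem partialInverse_apply_of_lt {k : ℕ} (hk : k ≤ N - r + 1) (i : Fin N) {c : Fin N}
    (hc : (c : ℕ) + 1 < k) : partialInverse Lk Llast R k i c = R⁻¹ i c :=
  mul_apply_of_mem_identityOn_right (prodDescFrom_mem_identityOn Lk Llast hk) _ i hc

theorem partialInverse_apply_eq_of_le {k m : ℕ} (hkm : k ≤ m) (hm : m ≤ N - r + 1)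
    (i : Fin N) {c : Fin N} (hc : m - 1 + r ≤ (c : ℕ)) :
    partialInverse Lk Llast R k i c = partialInverse Lk Llast R m i c := by
  induction m, hkm using Nat.le_induction with
  | base => rfl
  | succ m hkm ih =>
    rw [ih (by omega) (by omega), partialInverse_succ (by omega),
      mul_apply_of_mem_identityOn_right (embed_mem_identityOn m (Lk m)) _ i
        (Or.inr (by omega) : c ∈ {i : Fin N | (i : ℕ) + 1 < m ∨ m + r ≤ (i : ℕ)})]

end PartialProducts

section Recursion

variable {N r : ℕ} {Lk : ℕ → Matrix (Fin (r + 1)) (Fin (r + 1)) ℂ}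
  {Llast : Matrix (Fin r) (Fin r) ℂ} {R : Matrix (Fin N) (Fin N) ℂ}

theorem partialInverse_apply_window (hRtri : R.IsUpperTriangular) {k : ℕ} (hk1 : 1 ≤ k)
    (hk2 : k ≤ N - r) {i : Fin N} (hi : k ≤ (i : ℕ)) (j : Fin (r + 1)) :
    partialInverse Lk Llast R k i ⟨k - 1 + j, by omega⟩
      = ∑ l : Fin r, colBlock (partialInverse Lk Llast R (k + 1)) k r i l * Lk k l.succ j := by
  rw [partialInverse_succ hk2, mul_embed_apply_window hk1 (by omega), Fin.sum_univ_succ]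
  -- column `k - 1` of `B_{k+1}` is still that of `R⁻¹`, which vanishes below the diagonal
  have hleft : partialInverse Lk Llast R (k + 1) i ⟨k - 1 + ((0 : Fin (r + 1)) : ℕ), by omega⟩
      = 0 := by
    rw [partialInverse_apply_of_lt (by omega) i (by simp only [Fin.val_zero]; omega)]
    exact hRtri.inv (show k - 1 + ((0 : Fin (r + 1)) : ℕ) < i by simp only [Fin.val_zero]; omega)
  rw [hleft, zero_mul, zero_add]
  refine Finset.sum_congr rfl fun l _ => ?_
  rw [colBlock_apply _ _ _ _ (c := ⟨k - 1 + l.succ, by omega⟩)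
    (by simp only [Fin.val_succ]; omega)]

theorem colBlock_partialInverse_eq_vecMul (hRtri : R.IsUpperTriangular) {k : ℕ} (hk1 : 1 ≤ k)
    (hk2 : k ≤ N - r) {i : Fin N} (hi : k ≤ (i : ℕ)) :
    colBlock (partialInverse Lk Llast R k) (k - 1) r i
      = colBlock (partialInverse Lk Llast R (k + 1)) k r i ᵥ* blkA r (Lk k) := by
  funext j
  rw [colBlock_apply _ _ _ _ (c := ⟨k - 1 + j, by omega⟩) rfl]
  exact partialInverse_apply_window hRtri hk1 hk2 hi j.castSucc

theorem partialInverse_apply_lastCol (hRtri : R.IsUpperTriangular) {k : ℕ} (hk1 : 1 ≤ k)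
    (hk2 : k ≤ N - r) {i : Fin N} (hi : k ≤ (i : ℕ)) :
    partialInverse Lk Llast R k i ⟨k - 1 + r, by omega⟩
      = colBlock (partialInverse Lk Llast R (k + 1)) k r i ⬝ᵥ fun l => blkQ r (Lk k) l 0 :=
  partialInverse_apply_window hRtri hk1 hk2 hi (Fin.last r)

theorem colBlock_partialInverse_eq_vecMul_aGT (hRtri : R.IsUpperTriangular) {k m : ℕ}
    (hk : 1 ≤ k) (hkm : k ≤ m) (hm : m ≤ N - r + 1) {i : Fin N} (hi : m - 1 ≤ (i : ℕ)) :
    colBlock (partialInverse Lk Llast R k) (k - 1) r i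
      = colBlock (partialInverse Lk Llast R m) (m - 1) r i
          ᵥ* aGT r (fun k => blkA r (Lk k)) m (k - 1) := by
  induction m, hkm using Nat.le_induction with
  | base => rw [aGT_of_le _ le_rfl, vecMul_one]
  | succ m hkm ih =>
    rw [ih (by omega) (by omega), colBlock_partialInverse_eq_vecMul hRtri (by omega) (by omega)
      (by omega), aGT_succ_left _ (by omega), vecMul_vecMul, Nat.add_sub_cancel]

end Recursion

section Generators

variable {N r : ℕ} {Lk : ℕ → Matrix (Fin (r + 1)) (Fin (r + 1)) ℂ}
  {Llast : Matrix (Fin r) (Fin r) ℂ} {R : Matrix (Fin N) (Fin N) ℂ}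

theorem partialInverse_one_apply_left (hRtri : R.IsUpperTriangular) (hrN : r ≤ N) {m : ℕ}
    (hm1 : 1 ≤ m) (hm : m ≤ N - r + 1) {i : Fin N} (hi : m - 1 ≤ (i : ℕ)) (j : Fin r) :
    partialInverse Lk Llast R 1 i ⟨j, by omega⟩
      = (colBlock (partialInverse Lk Llast R m) (m - 1) r i
          ᵥ* aGT r (fun k => blkA r (Lk k)) m 0) j := by
  rw [← colBlock_partialInverse_eq_vecMul_aGT hRtri le_rfl hm1 hm hi,
    colBlock_apply _ _ _ _ (c := ⟨j, by omega⟩) (by simp)]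

theorem partialInverse_one_apply_strip (hRtri : R.IsUpperTriangular) {m : ℕ}
    (hm : m ≤ N - r + 1) {i : Fin N} (hi : m - 1 ≤ (i : ℕ)) {s : ℕ} (hs1 : 2 ≤ s)
    (hsm : s ≤ m) :
    partialInverse Lk Llast R 1 i ⟨r + s - 2, by omega⟩
      = (colBlock (partialInverse Lk Llast R m) (m - 1) r i
          ᵥ* aGT r (fun k => blkA r (Lk k)) m (s - 1))
        ⬝ᵥ fun l => blkQ r (Lk (s - 1)) l 0 := by
  have hstrip := partialInverse_apply_lastCol (Lk := Lk) (Llast := Llast) hRtri (k := s - 1)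
    (by omega) (by omega) (i := i) (by omega)
  rw [Nat.sub_add_cancel (by omega : 1 ≤ s)] at hstrip
  calc partialInverse Lk Llast R 1 i ⟨r + s - 2, by omega⟩
      = partialInverse Lk Llast R (s - 1) i ⟨r + s - 2, by omega⟩ :=
        partialInverse_apply_eq_of_le (by omega) (by omega) i (by simp only; omega)
    _ = partialInverse Lk Llast R (s - 1) i ⟨s - 1 - 1 + r, by omega⟩ := by
        congr 2
        omega
    _ = _ := by
        rw [hstrip, colBlock_partialInverse_eq_vecMul_aGT hRtri (by omega) hsm hm hi]

end Generators

section DiagonalBlocks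

variable {N r : ℕ} {Lk : ℕ → Matrix (Fin (r + 1)) (Fin (r + 1)) ℂ}
  {Llast : Matrix (Fin r) (Fin r) ℂ} {R : Matrix (Fin N) (Fin N) ℂ}

theorem colBlock_partialInverse_top (hR : IsUnit R) (hRtri : R.IsUpperTriangular)
    (hrN : r ≤ N) {i : Fin N} {u : Fin r} (hi : (i : ℕ) = N - r + u) :
    colBlock (partialInverse Lk Llast R (N - r + 1)) (N - r) r i
      = ((of fun i j : Fin r => R ⟨N - r + i, by omega⟩ ⟨N - r + j, by omega⟩)⁻¹ * Llast)
          u := by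
  let e : Fin r → Fin N := fun m => ⟨N - r + m, by omega⟩
  have he : Function.Injective e := fun m m' h => Fin.ext (by simpa [e] using h)
  have hS : (of fun i j : Fin r => R ⟨N - r + i, by omega⟩ ⟨N - r + j, by omega⟩)⁻¹
      = R⁻¹.submatrix e e :=
    inv_submatrix_eq_submatrix_inv R ((isUnit_iff_isUnit_det R).mp hR) e he
      fun u l hl => hRtri (show (l : ℕ) < N - r + u by
        by_contra! h
        exact hl ⟨⟨l - (N - r), by omega⟩, Fin.ext (by simp only [e]; omega)⟩)
  rw [show i = e u from Fin.ext hi]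
  funext j
  rw [colBlock_apply _ _ _ _ (c := e j) rfl, partialInverse, prodDescFrom_top,
    mul_embedLast_apply_window hrN, hS]
  rfl

theorem smul_colBlock_partialInverse_topRow (hR : IsUnit R) (hRtri : R.IsUpperTriangular)
    (hRband : ∀ i j : Fin N, (i : ℕ) + r < (j : ℕ) → R i j = 0) {k : ℕ} (hk1 : 1 ≤ k)
    (hk2 : k ≤ N - r) {T : Matrix (Fin r) (Fin r) ℂ}
    (hT : ∀ (u : Fin r) (i : Fin N), (i : ℕ) = k + u →
      colBlock (partialInverse Lk Llast R (k + 1)) k r i = T u)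
    {d : Fin N} (hd : (d : ℕ) = k - 1) :
    R d d • colBlock (partialInverse Lk Llast R k) (k - 1) r d
      = blkP r (Lk k) 0 - colBlock R k r d ᵥ* (T * blkA r (Lk k)) := by
  funext j
  -- row `k` of `R * B_k = L̃_{N-r+1} ⋯ L̃_k` is row `1` of `L_k` on the window
  have hrow : (R * partialInverse Lk Llast R k) d ⟨k - 1 + j, by omega⟩ = blkP r (Lk k) 0 j := by
    rw [mul_partialInverse hR, prodDescFrom_succ _ _ hk2,
      mul_apply_of_mem_identityOn_left
        (prodDescFrom_mem_identityOn Lk Llast (k := k + 1) (by omega)) _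
        (show (d : ℕ) + 1 < k + 1 by omega),
      embed_apply_window hk1 _ (i := 0) (j := j.castSucc) (by simp [hd]) (by simp)]
    rfl
  have hbelow : ∀ τ : Fin r, partialInverse Lk Llast R k ⟨k + τ, by omega⟩ ⟨k - 1 + j, by omega⟩
      = (T * blkA r (Lk k)) τ j := fun τ => by
    have h := congrFun (colBlock_partialInverse_eq_vecMul (Lk := Lk) (Llast := Llast) hRtri hk1
      hk2 (i := ⟨k + τ, by omega⟩) (by simp)) j
    rwa [hT τ _ rfl, colBlock_apply _ _ _ _ (c := ⟨k - 1 + j, by omega⟩) rfl] at h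
  rw [mul_apply_of_upperBand hRtri hRband _ hk1 (by omega) hd] at hrow
  simp only [hbelow] at hrow
  rw [Pi.smul_apply, smul_eq_mul, colBlock_apply _ _ _ _ (c := ⟨k - 1 + j, by omega⟩) rfl,
    Pi.sub_apply]
  exact eq_sub_of_add_eq hrow

end DiagonalBlocks

theorem colBlock_partialInverse_diag {N r : ℕ} (hr : 0 < r) {R : Matrix (Fin N) (Fin N) ℂ}
    (hR : IsUnit R) (hRtri : R.IsUpperTriangular)
    (hRband : ∀ i j : Fin N, (i : ℕ) + r < (j : ℕ) → R i j = 0)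
    {Lk : ℕ → Matrix (Fin (r + 1)) (Fin (r + 1)) ℂ} {Llast : Matrix (Fin r) (Fin r) ℂ}
    {t : ℕ → Matrix (Fin r) (Fin r) ℂ}
    (htTop : ∀ (u : Fin r) (i : Fin N), (i : ℕ) = N - r + u →
      colBlock (partialInverse Lk Llast R (N - r + 1)) (N - r) r i = t (N - r + 1) u)
    (htFirst : ∀ k, 1 ≤ k → k ≤ N - r → ∀ d : Fin N, (d : ℕ) = k - 1 →
      R d d • t k ⟨0, hr⟩ = blkP r (Lk k) 0 - colBlock R k r d ᵥ* (t (k + 1) * blkA r (Lk k)))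
    (htRec : ∀ k, 1 ≤ k → k ≤ N - r → ∀ (u : Fin r) (hu : (u : ℕ) + 1 < r),
      t k ⟨u + 1, hu⟩ = t (k + 1) u ᵥ* blkA r (Lk k))
    (k : ℕ) (hk1 : 1 ≤ k) (hk2 : k ≤ N - r + 1) (u : Fin r) (i : Fin N)
    (hi : (i : ℕ) = k - 1 + u) :
    colBlock (partialInverse Lk Llast R k) (k - 1) r i = t k u := by
  induction hk2 using Nat.decreasingInduction generalizing u i with
  | self => exact htTop u i (by omega)
  | of_succ k hk ih =>
    replace ih : ∀ (u : Fin r) (i : Fin N), (i : ℕ) = k + u →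
        colBlock (partialInverse Lk Llast R (k + 1)) k r i = t (k + 1) u := fun u i hi => by
      simpa using ih (by omega) u i (by omega)
    rcases u with ⟨_ | u, hu⟩
    · have hd : (i : ℕ) = k - 1 := by simpa using hi
      refine ((hRtri.isUnit_apply_self hR i).smul_left_cancel).mp ?_
      rw [smul_colBlock_partialInverse_topRow hR hRtri hRband hk1 (by omega) ih hd,
        htFirst k hk1 (by omega) i hd]
    · simp only at hi
      rw [htRec k hk1 (by omega) ⟨u, by omega⟩ hu,
        colBlock_partialInverse_eq_vecMul hRtri hk1 (by omega) (i := i) (by omega),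
        ih ⟨u, by omega⟩ i (by simp only; omega)]

/-- **LU-based inversion of a two-sided band matrix (linear complexity version).**
With `A = L·R`, `R` invertible upper triangular and upper band of order `r`, and `L` unit
lower triangular with `L⁻¹ = L̃_{N-r+1}·L̃_{N-r}⋯L̃_1` (lower triangular factors), the data
`q(k) = q_L(k)`, `a(k) = a_L(k)` (blocks of `L_k`),
`p(N-r+1) = t_{N-r+1} = (R(N-r+1:N, N-r+1:N))⁻¹·L_{N-r+1}` and, recursively downwards,
`p(k) = (1/x_k)·(p_L(k) − X_k·t_{k+1}·a(k))`, `t_k = (p(k); t_{k+1}(1:r-1, :)·a(k))`,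
yield lower Green generators of `A⁻¹`. -/
theorem lu_inversion_twoSidedBand (N r : ℕ) (hr : 0 < r) (hNr : r < N)
    (A : Matrix (Fin N) (Fin N) ℂ)
    (L R : Matrix (Fin N) (Fin N) ℂ)
    (hR : IsUnit R)
    (hRtri : ∀ i j : Fin N, (j : ℕ) < (i : ℕ) → R i j = 0)
    (hRband : ∀ i j : Fin N, (i : ℕ) + r < (j : ℕ) → R i j = 0)
    (hALR : A = L * R)
    (Lk : ℕ → Matrix (Fin (r + 1)) (Fin (r + 1)) ℂ) (Llast : Matrix (Fin r) (Fin r) ℂ)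
    (hfac : L⁻¹ = embedLast N r Llast * prodDesc N r Lk)
    -- the truncated matrices `t_k` (of size `r × r`)
    (t : ℕ → Matrix (Fin r) (Fin r) ℂ)
    (htTop : ∀ (i : Fin r) (j : Fin r),
      t (N - r + 1) i j
        = (((Matrix.of fun i j : Fin r =>
              R ⟨N - r + (i : ℕ), by have := i.isLt; omega⟩
                ⟨N - r + (j : ℕ), by have := j.isLt; omega⟩)⁻¹) * Llast) i j)
    (p : ℕ → Matrix (Fin 1) (Fin r) ℂ)
    (hp : ∀ (k : ℕ) (hk1 : 1 ≤ k) (hk2 : k ≤ N - r) (j : Fin r),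
      p k 0 j = (1 / R ⟨k - 1, by omega⟩ ⟨k - 1, by omega⟩)
        * (blkP r (Lk k) 0 j
            - ∑ τ : Fin r, ∑ l : Fin r,
                R ⟨k - 1, by omega⟩ ⟨k + (τ : ℕ), by have := τ.isLt; omega⟩
                  * t (k + 1) τ l * blkA r (Lk k) l j))
    (htFirst : ∀ (k : ℕ) (hk1 : 1 ≤ k) (hk2 : k ≤ N - r) (j : Fin r),
      t k ⟨0, by omega⟩ j = p k 0 j)
    (htRec : ∀ (k : ℕ) (hk1 : 1 ≤ k) (hk2 : k ≤ N - r)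
        (i : ℕ) (hi : i < r - 1) (j : Fin r),
      t k ⟨i + 1, by omega⟩ j = ∑ l : Fin r, t (k + 1) ⟨i, by omega⟩ l * blkA r (Lk k) l j) :
    IsLowerGreenGenerators N r hNr p (fun k => blkQ r (Lk k)) (fun k => blkA r (Lk k))
      (Matrix.of fun i j : Fin r => t (N - r + 1) i j) A⁻¹ := by
  have hRtri' : R.IsUpperTriangular := fun i j => hRtri i j
  have hinv : A⁻¹ = partialInverse Lk Llast R 1 := by
    rw [hALR, Matrix.mul_inv_rev, hfac, partialInverse, prodDescFrom_one]
  have hdiag := colBlock_partialInverse_diag hr hR hRtri' hRband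
    (fun u i hi =>
      (colBlock_partialInverse_top hR hRtri' hNr.le hi).trans (funext (htTop u)).symm)
    -- `hp` and `htFirst` say `x_k • t_k(1, :) = p_L(k) - X_k ᵥ* (t_{k+1} * a(k))`
    (fun k hk1 hk2 d hd => by
      rw [show d = ⟨k - 1, by omega⟩ from Fin.ext hd]
      funext j
      have hX : ∀ τ : Fin r, colBlock R k r ⟨k - 1, by omega⟩ τ
          = R ⟨k - 1, by omega⟩ ⟨k + τ, by omega⟩ := fun τ => colBlock_apply _ _ _ _ rfl
      rw [Pi.smul_apply, smul_eq_mul, htFirst k hk1 hk2 j, hp k hk1 hk2 j, ← mul_assoc,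
        mul_one_div_cancel (hRtri'.isUnit_apply_self hR _).ne_zero, one_mul]
      simp only [Pi.sub_apply, vecMul, dotProduct, mul_apply, hX, Finset.mul_sum, mul_assoc])
    (fun k hk1 hk2 u hu => funext (htRec k hk1 hk2 u (by omega)))
  have hrow : ∀ i (hi1 : 1 ≤ i) (hi2 : i ≤ N - r),
      colBlock (partialInverse Lk Llast R i) (i - 1) r ⟨i - 1, by omega⟩ = p i 0 :=
    fun i hi1 hi2 => funext fun j => by
      rw [hdiag i hi1 (by omega) ⟨0, hr⟩ _ (by simp), htFirst i hi1 hi2 j]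
  have hlast : ∀ u : Fin r,
      colBlock (partialInverse Lk Llast R (N - r + 1)) (N - r + 1 - 1) r ⟨N - r + u, by omega⟩
        = t (N - r + 1) u :=
    fun u => hdiag _ (by omega) le_rfl u _ (by simp)
  rw [hinv]
  refine ⟨fun i hi1 hi2 j => ?_, fun i hi1 hi2 s hs1 hs2 => ?_, fun u j => ?_,
    fun u s hs1 hs2 => ?_⟩
  · rw [partialInverse_one_apply_left hRtri' hNr.le hi1 (by omega) (by simp) j, hrow i hi1 hi2]
    rfl
  · rw [partialInverse_one_apply_strip hRtri' (by omega) (by simp) hs1 hs2, hrow i hi1 hi2]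
    rfl
  · rw [partialInverse_one_apply_left hRtri' hNr.le (by omega) le_rfl (by simp) j, hlast u]
    rfl
  · rw [partialInverse_one_apply_strip hRtri' le_rfl (by simp) hs1 hs2, hlast u]
    rfl
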